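/- Let A₁,…,A_m be pairwise commuting real n×n matrices with Bⱼ = Aⱼᵀ, and suppose ν¹,…,ν^{m+1} are common real eigenvectors: Bⱼνᵏ = λₖʲνᵏ for all j,k. Let h₁,…,h_{m+1} be real numbers, not all zero, satisfying ∑_{k=1}^{m+1} λₖʲ hₖ = 0 for each j = 1,…,m. Then F(x) = ∏_{k=1}^{m+1} |νᵏ·x|^{hₖ} is an autonomous first integral of the Lappo-Danilevskii system dx/dt = (∑ⱼ αⱼ(t)Aⱼ)x on any open set where all νᵏ·x ≠ 0; equivalently, F satisfies (∇F(x))·(Aⱼx) = 0 for every j = 1,…,m. -/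

import Mathlib

/-!
Where every `νᵏ·x` is nonzero, `F = exp (∑ₖ hₖ log |νᵏ·x|)`, so `𝔞ⱼF = F · ∑ₖ hₖ (νᵏ·Aⱼx)/(νᵏ·x)`.
Since `νᵏ·Aⱼx = (Aⱼᵀνᵏ)·x = λₖʲ (νᵏ·x)`, the sum is `∑ₖ λₖʲ hₖ = 0`.
-/

open Matrix Filter Topology

theorem Matrix.dotProduct_mulVec_of_transpose_mulVec_eq_smul {R ι : Type*} [CommSemiring R]
    [Fintype ι] {A : Matrix ι ι R} {v : ι → R} {c : R} (hv : Aᵀ *ᵥ v = c • v) (x : ι → R) :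
    v ⬝ᵥ A *ᵥ x = c * (v ⬝ᵥ x) := by
  rw [dotProduct_mulVec, ← mulVec_transpose, hv, smul_dotProduct, smul_eq_mul]

theorem Matrix.hasFDerivAt_dotProduct {ι : Type*} [Fintype ι] (v x : ι → ℝ) :
    HasFDerivAt (v ⬝ᵥ ·) (LinearMap.toContinuousLinearMap (dotProductBilin ℝ ℝ v)) x :=
  (LinearMap.toContinuousLinearMap (dotProductBilin ℝ ℝ v)).hasFDerivAt

theorem Real.prod_abs_rpow_eq_exp_sum_mul_log {ι : Type*} [Fintype ι] {a : ι → ℝ}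
    (ha : ∀ k, a k ≠ 0) (h : ι → ℝ) : ∏ k, |a k| ^ h k = Real.exp (∑ k, h k * Real.log (a k)) := by
  rw [Real.exp_sum]
  refine Finset.prod_congr rfl fun k _ => ?_
  rw [Real.rpow_def_of_pos (abs_pos.mpr (ha k)), Real.log_abs, mul_comm]

section LogDerivative

variable {ι E : Type*} [Fintype ι] [NormedAddCommGroup E] [NormedSpace ℝ E]
  {f : ι → E → ℝ} {f' : ι → E →L[ℝ] ℝ} {x : E}

theorem HasFDerivAt.prod_abs_rpow (hf : ∀ k, HasFDerivAt (f k) (f' k) x) (hx : ∀ k, f k x ≠ 0)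
    (h : ι → ℝ) :
    HasFDerivAt (fun y => ∏ k, |f k y| ^ h k)
      ((∏ k, |f k x| ^ h k) • ∑ k, (h k / f k x) • f' k) x := by
  have hlog : HasFDerivAt (fun y => ∑ k, h k * Real.log (f k y))
      (∑ k, (h k / f k x) • f' k) x := by
    refine HasFDerivAt.fun_sum fun k _ => ?_
    simpa only [smul_smul, div_eq_mul_inv] using ((hf k).log (hx k)).const_mul (h k)
  have hne : ∀ᶠ y in 𝓝 x, ∀ k, f k y ≠ 0 :=
    eventually_all.2 fun k => (hf k).continuousAt.eventually_ne (hx k)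
  rw [Real.prod_abs_rpow_eq_exp_sum_mul_log hx]
  exact hlog.exp.congr_of_eventuallyEq <|
    hne.mono fun y hy => Real.prod_abs_rpow_eq_exp_sum_mul_log hy h

end LogDerivative

theorem autonomous_first_integral_lappo_danilevskii_general
    (m n : ℕ) (Amat : Fin m → Matrix (Fin n) (Fin n) ℝ)
    (ν : Fin (m + 1) → Fin n → ℝ)
    (lam : Fin (m + 1) → Fin m → ℝ)
    (heig : ∀ k j, (Amat j)ᵀ.mulVec (ν k) = lam k j • ν k)
    (h : Fin (m + 1) → ℝ)
    (hsol : ∀ j, ∑ k, lam k j * h k = 0) :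
    ∀ x : Fin n → ℝ, (∀ k, ν k ⬝ᵥ x ≠ 0) → ∀ j,
      fderiv ℝ (fun y => ∏ k, |ν k ⬝ᵥ y| ^ h k) x ((Amat j).mulVec x) = 0 := by
  intro x hx j
  rw [(HasFDerivAt.prod_abs_rpow (fun k => hasFDerivAt_dotProduct (ν k) x) hx h).fderiv]
  have hterm : ∀ k, h k / (ν k ⬝ᵥ x) * (ν k ⬝ᵥ Amat j *ᵥ x) = lam k j * h k := fun k => by
    rw [dotProduct_mulVec_of_transpose_mulVec_eq_smul (heig k j)]
    field_simp [hx k]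
  simp [hterm, hsol]

/-- Theorem 2.8: for pairwise commuting matrices `A₁,…,A_m` with common real
eigenvectors `ν¹,…,ν^{m+1}` of the transposes (`Aⱼᵀνᵏ = λₖʲνᵏ`) and reals
`h₁,…,h_{m+1}`, not all zero, with `∑ₖ λₖʲhₖ = 0` for each `j`, the function
`F(x) = ∏ₖ |νᵏ·x|^{hₖ}` is an autonomous first integral of the Lappo-Danilevskii
system: it is annihilated by every derivation `𝔞ⱼF(x) = (∇F(x))·(Aⱼx)`. -/
theorem autonomous_first_integral_lappo_danilevskii
    (m n : ℕ) (Amat : Fin m → Matrix (Fin n) (Fin n) ℝ)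
    (hcomm : ∀ j k, Amat j * Amat k = Amat k * Amat j)
    (ν : Fin (m + 1) → Fin n → ℝ) (hν : ∀ k, ν k ≠ 0)
    (lam : Fin (m + 1) → Fin m → ℝ)
    (heig : ∀ k j, (Amat j)ᵀ.mulVec (ν k) = lam k j • ν k)
    (h : Fin (m + 1) → ℝ) (hh : h ≠ 0)
    (hsol : ∀ j, ∑ k, lam k j * h k = 0) :
    ∀ x : Fin n → ℝ, (∀ k, ν k ⬝ᵥ x ≠ 0) → ∀ j,
      fderiv ℝ (fun y => ∏ k, |ν k ⬝ᵥ y| ^ h k) x ((Amat j).mulVec x) = 0 :=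
  autonomous_first_integral_lappo_danilevskii_general m n Amat ν lam heig h hsol
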